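/- Let q be an odd prime power and P ⊆ F_q^d × F_q^d. With N(P) = #{((x,y),(u,v)) ∈ P×P : ‖x−u‖ = ‖y−v‖}, one has |N(P) − |P|²/q| ≤ C·q^d·|P| for an absolute constant C (in fact N(P) ≤ |P|²/q + q^d|P|). -/

import Mathlib

/-!
Let `ψ` be a primitive additive character of `F` and `Q x = x ⬝ᵥ A *ᵥ x`. Detecting `Q (p - p') = c`
by `∑ t, ψ (t * (Q (p - p') - c))` gives `q N = |P|² + ∑_{t ≠ 0} ∑_{p, p' ∈ P} ψ (…)`. Since
`Q (p - p') = Q p + Q p' - ((A + Aᵀ) *ᵥ p) ⬝ᵥ p'`, the inner sum over `p'` is, up to a unimodular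
factor, the Fourier coefficient at `(t, -t • (A + Aᵀ) *ᵥ p)` of the graph `{(Q p', p')}` of `Q` over
`P` (the extended point set `P'`). When `A + Aᵀ` is invertible these frequencies are distinct for
`t ≠ 0`, so Cauchy–Schwarz and Parseval (the squared coefficients sum to `q ^ (n + 1) |P|`, where
`n = |ι|`) bound the error by `q · q^(n/2) |P|`. The condition `‖x - u‖ = ‖y - v‖` is `Q = 0` for
`A = diag(1, -1)` on `F^(2d)`, and `A + Aᵀ = diag(2, -2)` is invertible in odd characteristic.
-/

open Finset Matrix ComplexConjugate

lemma AddChar.map_sum_eq_prod {A R ι : Type*} [AddCommMonoid A] [CommMonoid R] (ψ : AddChar A R)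
    (s : Finset ι) (f : ι → A) : ψ (∑ i ∈ s, f i) = ∏ i ∈ s, ψ (f i) := by
  have := map_prod ψ.toMonoidHom (fun i => Multiplicative.ofAdd (f i)) s
  rwa [← ofAdd_sum] at this

lemma sq_sum_comp_le_card_mul_sum_sq {β γ : Type*} [Fintype γ] {s : Finset β} {φ : β → γ}
    (hφ : Set.InjOn φ s) (g : γ → ℝ) : (∑ x ∈ s, g (φ x)) ^ 2 ≤ #s * ∑ z, g z ^ 2 := by
  classical
  refine sq_sum_le_card_mul_sum_sq.trans (mul_le_mul_of_nonneg_left ?_ (by positivity))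
  rw [← sum_image (f := fun z => g z ^ 2) hφ]
  exact sum_le_univ_sum_of_nonneg fun z => sq_nonneg _

section QuadraticForm

variable {F ι : Type*} [Field F] [Fintype ι]

lemma dotProduct_mulVec_sub_self (A : Matrix ι ι F) (x y : ι → F) :
    (x - y) ⬝ᵥ A *ᵥ (x - y) = x ⬝ᵥ A *ᵥ x + y ⬝ᵥ A *ᵥ y - ((A + Aᵀ) *ᵥ x) ⬝ᵥ y := by
  rw [mulVec_sub, dotProduct_sub, sub_dotProduct, sub_dotProduct, add_mulVec, add_dotProduct,
    mulVec_transpose, dotProduct_mulVec x A y, dotProduct_comm y]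
  ring

variable [Fintype F] [DecidableEq F]

noncomputable def graphCharSum (ψ : AddChar F ℂ) (f : (ι → F) → F) (P : Finset (ι → F))
    (z : F × (ι → F)) : ℂ :=
  ∑ p ∈ P, ψ (z.1 * f p + z.2 ⬝ᵥ p)

lemma card_mul_card_filter_quadratic_sub_sq_eq {ψ : AddChar F ℂ} (hψ : ψ.IsPrimitive)
    (A : Matrix ι ι F) (c : F) (P : Finset (ι → F)) :
    (Fintype.card F : ℂ) * #{pq ∈ P ×ˢ P | (pq.1 - pq.2) ⬝ᵥ A *ᵥ (pq.1 - pq.2) = c} - #P ^ 2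
      = ∑ t ∈ univ.erase 0, ∑ p ∈ P, ψ (t * (p ⬝ᵥ A *ᵥ p - c)) *
          graphCharSum ψ (fun x => x ⬝ᵥ A *ᵥ x) P (t, -t • (A + Aᵀ) *ᵥ p) := by
  have detect (p p' : ι → F) : ∑ t : F, ψ (t * ((p - p') ⬝ᵥ A *ᵥ (p - p') - c))
      = if (p - p') ⬝ᵥ A *ᵥ (p - p') = c then (Fintype.card F : ℂ) else 0 := by
    simp [AddChar.sum_mulShift _ hψ, sub_eq_zero]
  have split (t : F) (p : ι → F) : ∑ p' ∈ P, ψ (t * ((p - p') ⬝ᵥ A *ᵥ (p - p') - c))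
      = ψ (t * (p ⬝ᵥ A *ᵥ p - c)) *
          graphCharSum ψ (fun x => x ⬝ᵥ A *ᵥ x) P (t, -t • (A + Aᵀ) *ᵥ p) := by
    rw [graphCharSum, mul_sum]
    refine sum_congr rfl fun p' _ => ?_
    rw [← AddChar.map_add_eq_mul, dotProduct_mulVec_sub_self, neg_smul, neg_dotProduct,
      smul_dotProduct, smul_eq_mul]
    ring_nf
  have count : (Fintype.card F : ℂ) * #{pq ∈ P ×ˢ P | (pq.1 - pq.2) ⬝ᵥ A *ᵥ (pq.1 - pq.2) = c}
      = ∑ t : F, ∑ p ∈ P, ∑ p' ∈ P, ψ (t * ((p - p') ⬝ᵥ A *ᵥ (p - p') - c)) := by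
    rw [sum_comm]
    simp_rw [sum_comm (s := univ), detect, card_filter, sum_product]
    push_cast
    simp_rw [mul_sum, mul_ite, mul_one, mul_zero]
  rw [count, ← add_sum_erase _ _ (mem_univ 0)]
  simp only [split, zero_mul, AddChar.map_zero_eq_one, sum_const, nsmul_eq_mul, mul_one]
  ring

variable [DecidableEq ι]

lemma sum_apply_dotProduct_eq_ite {R : Type*} [CommRing R] [IsDomain R] {ψ : AddChar F R}
    (hψ : ψ.IsPrimitive) (v : ι → F) :
    ∑ w : ι → F, ψ (w ⬝ᵥ v) = if v = 0 then (Fintype.card F : R) ^ Fintype.card ι else 0 := by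
  calc ∑ w : ι → F, ψ (w ⬝ᵥ v) = ∑ w : ι → F, ∏ i, ψ (w i * v i) := by
        simp only [dotProduct, AddChar.map_sum_eq_prod]
    _ = ∏ i, ∑ x : F, ψ (x * v i) := (Fintype.prod_sum fun i x => ψ (x * v i)).symm
    _ = _ := by
        simp only [AddChar.sum_mulShift _ hψ, Nat.cast_ite, Nat.cast_zero, Fintype.prod_ite_zero,
          prod_const, card_univ, funext_iff, Pi.zero_apply]

lemma sum_sq_norm_graphCharSum {ψ : AddChar F ℂ} (hψ : ψ.IsPrimitive) (f : (ι → F) → F)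
    (P : Finset (ι → F)) :
    ∑ z, ‖graphCharSum ψ f P z‖ ^ 2 = (Fintype.card F : ℝ) ^ (Fintype.card ι + 1) * #P := by
  have orthogonality (p p' : ι → F) :
      ∑ z : F × (ι → F), ψ (z.1 * f p + z.2 ⬝ᵥ p) * conj (ψ (z.1 * f p' + z.2 ⬝ᵥ p'))
        = if p = p' then (Fintype.card F : ℂ) ^ (Fintype.card ι + 1) else 0 := by
    have (z : F × (ι → F)) : ψ (z.1 * f p + z.2 ⬝ᵥ p) * conj (ψ (z.1 * f p' + z.2 ⬝ᵥ p'))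
        = ψ (z.1 * (f p - f p')) * ψ (z.2 ⬝ᵥ (p - p')) := by
      rw [← AddChar.map_neg_eq_conj, ← AddChar.map_add_eq_mul, ← AddChar.map_add_eq_mul,
        dotProduct_sub]
      ring_nf
    simp_rw [this, Fintype.sum_prod_type, ← mul_sum, ← sum_mul, AddChar.sum_mulShift _ hψ,
      sum_apply_dotProduct_eq_ite hψ, sub_eq_zero]
    by_cases h : p = p' <;> simp [h, pow_succ']
  apply Complex.ofReal_injective
  push_cast
  simp_rw [← Complex.mul_conj', graphCharSum, map_sum, sum_mul_sum]
  rw [sum_comm]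
  simp_rw [sum_comm (s := univ), orthogonality, sum_ite_eq]
  rw [sum_ite_mem, inter_self, sum_const, nsmul_eq_mul, mul_comm]

theorem abs_card_filter_quadratic_sub_le (A : Matrix ι ι F) (hA : IsUnit (A + Aᵀ)) (c : F)
    (P : Finset (ι → F)) :
    |(#{pq ∈ P ×ˢ P | (pq.1 - pq.2) ⬝ᵥ A *ᵥ (pq.1 - pq.2) = c} : ℝ)
      - #P ^ 2 / Fintype.card F| ≤ √((Fintype.card F : ℝ) ^ Fintype.card ι) * #P := by
  have := Finite.of_fintype F
  set ψ := AddChar.FiniteField.primitiveChar_to_Complex F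
  have hψ : ψ.IsPrimitive := AddChar.FiniteField.primitiveChar_to_Complex_isPrimitive F
  set S := graphCharSum ψ (fun x => x ⬝ᵥ A *ᵥ x) P
  set T := (univ.erase (0 : F)) ×ˢ P
  let φ : F × (ι → F) → F × (ι → F) := fun x => (x.1, -x.1 • (A + Aᵀ) *ᵥ x.2)
  have hφ : Set.InjOn φ T := by
    rintro ⟨t, p⟩ htp ⟨t', p'⟩ - h
    obtain ⟨rfl, h⟩ := Prod.mk.inj h
    have ht : -t ≠ 0 := neg_ne_zero.mpr (mem_erase.mp (mem_product.mp htp).1).1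
    rw [Prod.mk.injEq]
    exact ⟨rfl, mulVec_injective_iff_isUnit.mpr hA (smul_right_injective _ ht h)⟩
  have triangle : ‖(Fintype.card F : ℂ) * #{pq ∈ P ×ˢ P | (pq.1 - pq.2) ⬝ᵥ A *ᵥ (pq.1 - pq.2) = c}
      - #P ^ 2‖ ≤ ∑ x ∈ T, ‖S (φ x)‖ := by
    rw [card_mul_card_filter_quadratic_sub_sq_eq hψ A c P, sum_product]
    refine (norm_sum_le _ _).trans (sum_le_sum fun t _ => (norm_sum_le _ _).trans ?_)
    simp_rw [norm_mul, AddChar.norm_apply, one_mul]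
    rfl
  have cauchySchwarz : (∑ x ∈ T, ‖S (φ x)‖) ^ 2
      ≤ (Fintype.card F * √((Fintype.card F : ℝ) ^ Fintype.card ι) * #P) ^ 2 := by
    calc (∑ x ∈ T, ‖S (φ x)‖) ^ 2 ≤ #T * ∑ z, ‖S z‖ ^ 2 :=
          sq_sum_comp_le_card_mul_sum_sq hφ fun z => ‖S z‖
      _ ≤ (Fintype.card F * #P) * ((Fintype.card F : ℝ) ^ (Fintype.card ι + 1) * #P) := by
        rw [sum_sq_norm_graphCharSum hψ]
        gcongr
        rw [card_product, Nat.cast_mul]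
        gcongr
        exact Nat.cast_le.mpr (card_erase_le.trans_eq card_univ)
      _ = _ := by rw [mul_pow, mul_pow, Real.sq_sqrt (by positivity)]; ring
  have hsum := (pow_le_pow_iff_left₀ (by positivity) (by positivity) two_ne_zero).mp cauchySchwarz
  have hq : (0 : ℝ) < Fintype.card F := by positivity
  rw [← mul_le_mul_iff_left₀ hq, ← abs_of_pos hq, ← abs_mul, abs_of_pos hq, sub_mul,
    div_mul_cancel₀ _ hq.ne', mul_comm _ (Fintype.card F : ℝ), ← Real.norm_eq_abs,
    ← Complex.norm_real]
  push_cast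
  linarith

end QuadraticForm

section DiagonalForm

variable {F α β : Type*} [Field F] [Fintype α] [Fintype β] [DecidableEq α] [DecidableEq β]

lemma sumElim_dotProduct_diagonal_mulVec (x : α → F) (y : β → F) :
    Sum.elim x y ⬝ᵥ diagonal (Sum.elim 1 (-1)) *ᵥ Sum.elim x y = x ⬝ᵥ x - y ⬝ᵥ y := by
  simp [dotProduct, mulVec_diagonal, Fintype.sum_sum_type, sub_eq_add_neg]

lemma isUnit_diagonal_add_transpose (hF : ringChar F ≠ 2) :
    IsUnit (diagonal (Sum.elim 1 (-1) : α ⊕ β → F) + (diagonal (Sum.elim 1 (-1)))ᵀ) := by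
  rw [diagonal_transpose, diagonal_add, isUnit_diagonal, Pi.isUnit_iff]
  rintro (i | i) <;> simp [one_add_one_eq_two, ← neg_add, Ring.two_ne_zero hF]

lemma card_filter_dotProduct_sub_eq_card_filter_diagonal [DecidableEq F]
    (P : Finset ((α → F) × (β → F))) :
    #{pq ∈ P ×ˢ P | (pq.1.1 - pq.2.1) ⬝ᵥ (pq.1.1 - pq.2.1) = (pq.1.2 - pq.2.2) ⬝ᵥ (pq.1.2 - pq.2.2)}
      = #{pq ∈ P.map (Equiv.sumArrowEquivProdArrow α β F).symm.toEmbedding ×ˢ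
            P.map (Equiv.sumArrowEquivProdArrow α β F).symm.toEmbedding |
          (pq.1 - pq.2) ⬝ᵥ diagonal (Sum.elim 1 (-1)) *ᵥ (pq.1 - pq.2) = 0} := by
  rw [← prodMap_map_product, filter_map, card_map]
  refine congrArg card (filter_congr fun ⟨(x, y), (u, v)⟩ _ => ?_)
  change _ ↔ (Sum.elim x y - Sum.elim u v) ⬝ᵥ
    diagonal (Sum.elim 1 (-1)) *ᵥ (Sum.elim x y - Sum.elim u v) = 0
  rw [← Sum.elim_sub_sub, sumElim_dotProduct_diagonal_mulVec, sub_eq_zero]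

end DiagonalForm

/-- For `q` an odd prime power and `P ⊆ F_q^d × F_q^d`, with
`N(P) = #{((x,y),(u,v)) ∈ P×P : ‖x−u‖ = ‖y−v‖}`, one has
`|N(P) − |P|²/q| ≤ C·q^d·|P|` for an absolute constant `C`
(in fact `N(P) ≤ |P|²/q + q^d|P|`). -/
theorem stmt_12 :
    ∃ C : ℝ, 0 < C ∧
      ∀ (F : Type) [Field F] [Fintype F] [DecidableEq F],
        ringChar F ≠ 2 →
        ∀ (d : ℕ) (P : Finset ((Fin d → F) × (Fin d → F))),
          |((((P ×ˢ P).filter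
              (fun p => (p.1.1 - p.2.1) ⬝ᵥ (p.1.1 - p.2.1)
                = (p.1.2 - p.2.2) ⬝ᵥ (p.1.2 - p.2.2))).card : ℝ)
            - (P.card : ℝ) ^ 2 / (Fintype.card F : ℝ))|
            ≤ C * (Fintype.card F : ℝ) ^ d * P.card
          ∧ ((((P ×ˢ P).filter
              (fun p => (p.1.1 - p.2.1) ⬝ᵥ (p.1.1 - p.2.1)
                = (p.1.2 - p.2.2) ⬝ᵥ (p.1.2 - p.2.2))).card : ℝ))
            ≤ (P.card : ℝ) ^ 2 / (Fintype.card F : ℝ)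
              + (Fintype.card F : ℝ) ^ d * P.card := by
  refine ⟨1, one_pos, fun F _ _ _ hF d P => ?_⟩
  have key := abs_card_filter_quadratic_sub_le _ (isUnit_diagonal_add_transpose hF) 0
    (P.map (Equiv.sumArrowEquivProdArrow (Fin d) (Fin d) F).symm.toEmbedding)
  rw [← card_filter_dotProduct_sub_eq_card_filter_diagonal, card_map, Fintype.card_sum,
    Fintype.card_fin, ← two_mul, pow_mul', Real.sqrt_sq (by positivity)] at key
  rw [one_mul]
  exact ⟨key, by linarith [(abs_le.mp key).2]⟩
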